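/- A set F ⊆ {0,...,2^n-1} is called a lower set (frozen-set-like) if whenever i ∈ F and j ⪯_c i then j ∈ F. If F is a lower set and Q ⊆ F, then the destination set Q_n obtained by applying the general degradation process (levels 1 through n of the basic degradation mapping) to Q satisfies Q_n ⊆ F. -/
import Mathlib


/-- The covering relation on n-bit integers. -/
def cov (n j i : ℕ) : Prop := ∀ t < n, j.testBit t = true → i.testBit t = true

/-- `i` with bit `k` cleared (set to 0). -/
def clearBit (i k : ℕ) : ℕ := if i.testBit k then i - 2 ^ k else i

/-- The basic degradation mapping at level `k` on a set `D`: if the bit-`k` flip of `i`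
lies in `D` then `i` maps to itself, otherwise `i` maps to `i` with bit `k` cleared. -/
def bdm (D : Finset ℕ) (k i : ℕ) : ℕ := if (i ^^^ 2 ^ k) ∈ D then i else clearBit i k


/-- The general degradation process: `trace D₀ k i` is the node reached by `i ∈ D₀`
after successively applying the basic degradation mappings at levels `1,...,k`
(each level acting on the image of the previous one). -/
def trace (D0 : Finset ℕ) : ℕ → ℕ → ℕ
  | 0, i => i
  | k + 1, i => bdm (D0.image (trace D0 k)) k (trace D0 k i)


lemma clearBit_le (i k : ℕ) : clearBit i k ≤ i := by
  unfold clearBit; split <;> simp [Nat.sub_le]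

lemma clearBit_testBit {i k t : ℕ} (h : (clearBit i k).testBit t = true) :
    i.testBit t = true := by
  unfold clearBit at h
  by_cases hk : i.testBit k
  · rcases eq_or_ne t k with rfl | htk
    · exact hk
    · rw [if_pos hk] at h
      set a := i / 2 ^ (k + 1) with ha
      set b := i % 2 ^ k with hb
      have hb_lt : b < 2 ^ k := Nat.mod_lt _ (Nat.two_pow_pos k)
      have hdiv : i / 2 ^ k % 2 = 1 := by
        have := hk
        rw [Nat.testBit_eq_decide_div_mod_eq] at this
        simpa using this
      have hdd : i / 2 ^ k = 2 * a + 1 := by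
        have h1 : a = i / 2 ^ k / 2 := by
          rw [ha, pow_succ, Nat.div_div_eq_div_mul]
        omega
      have hi : i = 2 ^ (k + 1) * a + (2 ^ k + b) := by
        have h2 : i = 2 ^ k * (i / 2 ^ k) + b := by
          rw [hb]; exact (Nat.div_add_mod i (2^k)).symm
        rw [h2, hdd, pow_succ]; ring
      have hsub : i - 2 ^ k = 2 ^ (k + 1) * a + b := by
        have : (2:ℕ) ^ (k+1) = 2 * 2 ^ k := by rw [pow_succ]; ring
        omega
      rw [hsub] at h
      rw [hi]
      have hlt1 : 2 ^ k + b < 2 ^ (k + 1) := by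
        have : (2:ℕ) ^ (k+1) = 2 * 2 ^ k := by rw [pow_succ]; ring
        omega
      have hlt2 : b < 2 ^ (k + 1) := lt_trans hb_lt (by
        have : (2:ℕ) ^ (k+1) = 2 * 2 ^ k := by rw [pow_succ]; ring
        omega)
      rw [Nat.testBit_two_pow_mul_add a hlt1 t]
      rw [Nat.testBit_two_pow_mul_add a hlt2 t] at h
      split at h <;> rename_i hcase
      · rw [if_pos hcase]
        have htk' : t < k := by omega
        have : (2 ^ k + b).testBit t = b.testBit t := by
          have := Nat.testBit_two_pow_mul_add 1 hb_lt t
          simpa [if_pos htk'] using this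
        rw [this]; exact h
      · rw [if_neg hcase]; exact h
  · rw [if_neg hk] at h; exact h

lemma trace_le (D : Finset ℕ) (k i : ℕ) : trace D k i ≤ i := by
  induction k with
  | zero => simp [trace]
  | succ k ih =>
    simp only [trace, bdm]
    split
    · exact ih
    · exact le_trans (clearBit_le _ _) ih

lemma trace_testBit (D : Finset ℕ) (k i t : ℕ)
    (h : (trace D k i).testBit t = true) : i.testBit t = true := by
  induction k with
  | zero => simpa [trace] using h
  | succ k ih =>
    simp only [trace, bdm] at h
    split at h
    · exact ih h
    · exact ih (clearBit_testBit h)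

/-- If `F` is a lower set under the covering order and the puncturing set `Q ⊆ F`,
then the destination set `Q_n` of the degradation process is still contained in `F`. -/
theorem lowerSet_closed (n : ℕ) (F Q : Finset ℕ) (hF : ∀ i ∈ F, i < 2 ^ n)
    (hlower : ∀ i ∈ F, ∀ j < 2 ^ n, cov n j i → j ∈ F)
    (hQF : Q ⊆ F) : Q.image (trace Q n) ⊆ F := by
  intro x hx
  simp only [Finset.mem_image] at hx
  obtain ⟨q, hq, rfl⟩ := hx
  have hqF : q ∈ F := hQF hq
  have hqlt : q < 2 ^ n := hF q hqF
  exact hlower q hqF _ (lt_of_le_of_lt (trace_le Q n q) hqlt)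
    (fun t _ h => trace_testBit Q n q t h)
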